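/- Let 𝒳, 𝒴 be finite sets, (X,Y) with joint probability mass function p on 𝒳 × 𝒴, r(·|·) a conditional probability mass function on 𝒴 given 𝒳 with r(y|x) > 0 whenever p(x,y) > 0, Ω a finite set, P1 and P2 probability mass functions on Ω, and μ ∈ (0,1). If sup over D : Ω → (0,1) of [(1−μ)·L_f(r) − μ·(Σ_ω P1(ω)(−log D(ω)) + Σ_ω P2(ω)(−log(1−D(ω))))] = (1−μ)·H(Y|X) − μ·log 4, where L_f(r) = Σ_{x,y} p(x,y)(−log r(y|x)), then: (a) L_f(r) = H(Y|X), so r(y|x) = P(Y=y|X=x) whenever P(X=x) > 0 (i.e., the predictor is optimal); and (b) P1 = P2. -/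

import Mathlib

/-- Kullback–Leibler divergence between pmfs on a finite set. -/
noncomputable def KLdiv {Ω : Type*} [Fintype Ω] (p q : Ω → ℝ) : ℝ :=
  ∑ ω, p ω * Real.log (p ω / q ω)

/-- Jensen–Shannon divergence: `JSD(p‖q) = ½ KL(p‖m) + ½ KL(q‖m)` with `m = (p+q)/2`. -/
noncomputable def JSD {Ω : Type*} [Fintype Ω] (p q : Ω → ℝ) : ℝ :=
  KLdiv p (fun ω => (p ω + q ω) / 2) / 2 + KLdiv q (fun ω => (p ω + q ω) / 2) / 2

/-- The cross-entropy discriminator loss. -/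
noncomputable def discLoss {Ω : Type*} [Fintype Ω] (p q D : Ω → ℝ) : ℝ :=
  ∑ ω, p ω * (-Real.log (D ω)) + ∑ ω, q ω * (-Real.log (1 - D ω))

/-- The expected negative log-likelihood loss `L_f(r) = ∑_{x,y} p(x,y)(−log r(y|x))`. -/
noncomputable def nllLoss {𝒳 𝒴 : Type*} [Fintype 𝒳] [Fintype 𝒴] (p r : 𝒳 → 𝒴 → ℝ) : ℝ :=
  ∑ x, ∑ y, p x y * (-Real.log (r x y))

/-- The conditional entropy `H(Y|X) = ∑_{x,y} p(x,y)(−log p(y|x))`. -/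
noncomputable def condEnt {𝒳 𝒴 : Type*} [Fintype 𝒳] [Fintype 𝒴] (p : 𝒳 → 𝒴 → ℝ) : ℝ :=
  ∑ x, ∑ y, p x y * (-Real.log (p x y / ∑ y', p x y'))

/-!
Testing the discriminator `D ≡ 1/2` shows that the value is at least `(1−μ)L_f(r) − μ log 4`,
so `L_f(r) ≤ H(Y|X)`; Gibbs' inequality gives the reverse, with equality only for the true
conditional law. Once `L_f(r) = H(Y|X)`, the hypothesis says that every admissible discriminator
has loss at least `log 4`. The Bayes-optimal discriminator `P1/(P1+P2)` may take the values `0`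
and `1`, but the one halfway between it and `1/2` is admissible and, by concavity of `log`, has
loss at most `log 4 − JSD(P1‖P2)`. Hence `JSD(P1‖P2) = 0`, that is, `P1 = P2`.
-/

open Real InformationTheory

lemma mul_klFun_div (a : ℝ) {b : ℝ} (hb : b ≠ 0) :
    b * klFun (a / b) = a * log (a / b) + b - a := by
  rw [klFun_apply]
  field_simp

lemma sub_le_mul_log_div {a b : ℝ} (ha : 0 ≤ a) (hb : 0 ≤ b) (hab : 0 < a → 0 < b) :
    a - b ≤ a * log (a / b) := by
  rcases hb.eq_or_lt with rfl | hb
  · obtain rfl : a = 0 := by_contra fun h => (hab (ha.lt_of_ne' h)).false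
    simp
  · have := mul_nonneg hb.le (klFun_nonneg (div_nonneg ha hb.le))
    rw [mul_klFun_div a hb.ne'] at this
    linarith

lemma eq_of_mul_log_div_eq_sub {a b : ℝ} (ha : 0 ≤ a) (hb : 0 ≤ b) (hab : 0 < a → 0 < b)
    (h : a * log (a / b) = a - b) : a = b := by
  rcases hb.eq_or_lt with rfl | hb
  · exact by_contra fun h => (hab (ha.lt_of_ne' h)).false
  · have hkl : klFun (a / b) = 0 := by
      have := mul_klFun_div a hb.ne'
      rw [h] at this
      simpa [hb.ne'] using this
    rw [klFun_eq_zero_iff (div_nonneg ha hb.le), div_eq_one_iff_eq hb.ne'] at hkl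
    exact hkl

section KL

variable {ι : Type*} [Fintype ι] {f g : ι → ℝ}

lemma KLdiv_nonneg (hf : ∀ i, 0 ≤ f i) (hg : ∀ i, 0 ≤ g i) (hfg : ∀ i, 0 < f i → 0 < g i)
    (hsum : ∑ i, g i ≤ ∑ i, f i) : 0 ≤ KLdiv f g := by
  have := Finset.sum_le_sum fun i (_ : i ∈ Finset.univ) =>
    sub_le_mul_log_div (hf i) (hg i) (hfg i)
  rw [Finset.sum_sub_distrib] at this
  unfold KLdiv
  linarith

lemma eq_of_KLdiv_nonpos (hf : ∀ i, 0 ≤ f i) (hg : ∀ i, 0 ≤ g i)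
    (hfg : ∀ i, 0 < f i → 0 < g i) (hsum : ∑ i, f i = ∑ i, g i) (h : KLdiv f g ≤ 0) :
    f = g := by
  have hgap : ∀ i ∈ Finset.univ, 0 ≤ f i * log (f i / g i) - (f i - g i) := fun i _ =>
    sub_nonneg.2 (sub_le_mul_log_div (hf i) (hg i) (hfg i))
  have hsum_gap : ∑ i, (f i * log (f i / g i) - (f i - g i)) = 0 := by
    refine le_antisymm ?_ (Finset.sum_nonneg hgap)
    rw [Finset.sum_sub_distrib, Finset.sum_sub_distrib, hsum]
    unfold KLdiv at h
    linarith
  funext i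
  have := (Finset.sum_eq_zero_iff_of_nonneg hgap).1 hsum_gap i (Finset.mem_univ i)
  exact eq_of_mul_log_div_eq_sub (hf i) (hg i) (hfg i) (by linarith)

end KL

section Prediction

variable {𝒳 𝒴 : Type*} [Fintype 𝒴] {p r : 𝒳 → 𝒴 → ℝ}

lemma le_sum_marginal (hp0 : ∀ x y, 0 ≤ p x y) (x : 𝒳) (y : 𝒴) : p x y ≤ ∑ y', p x y' :=
  Finset.single_le_sum (fun y' _ => hp0 x y') (Finset.mem_univ y)

lemma marginal_mul_nonneg (hp0 : ∀ x y, 0 ≤ p x y) (hr0 : ∀ x y, 0 ≤ r x y) (z : 𝒳 × 𝒴) :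
    0 ≤ (∑ y', p z.1 y') * r z.1 z.2 :=
  mul_nonneg ((hp0 z.1 z.2).trans (le_sum_marginal hp0 z.1 z.2)) (hr0 z.1 z.2)

lemma marginal_mul_pos (hp0 : ∀ x y, 0 ≤ p x y) (hrpos : ∀ x y, 0 < p x y → 0 < r x y)
    (z : 𝒳 × 𝒴) (hz : 0 < p z.1 z.2) : 0 < (∑ y', p z.1 y') * r z.1 z.2 :=
  mul_pos (hz.trans_le (le_sum_marginal hp0 z.1 z.2)) (hrpos z.1 z.2 hz)

variable [Fintype 𝒳]

lemma nllLoss_sub_condEnt (hp0 : ∀ x y, 0 ≤ p x y) (hrpos : ∀ x y, 0 < p x y → 0 < r x y) :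
    nllLoss p r - condEnt p =
      KLdiv (fun z : 𝒳 × 𝒴 => p z.1 z.2) (fun z => (∑ y', p z.1 y') * r z.1 z.2) := by
  rw [nllLoss, condEnt, KLdiv,
    Fintype.sum_prod_type' fun x y => p x y * log (p x y / ((∑ y', p x y') * r x y)),
    ← Finset.sum_sub_distrib]
  refine Finset.sum_congr rfl fun x _ => ?_
  rw [← Finset.sum_sub_distrib]
  refine Finset.sum_congr rfl fun y _ => ?_
  rcases (hp0 x y).eq_or_lt with hxy | hxy
  · simp [← hxy]
  · have hs : 0 < ∑ y', p x y' := hxy.trans_le (le_sum_marginal hp0 x y)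
    rw [log_div hxy.ne' hs.ne', log_div hxy.ne' (mul_pos hs (hrpos x y hxy)).ne',
      log_mul hs.ne' (hrpos x y hxy).ne']
    ring

lemma sum_marginal_mul (hr1 : ∀ x, ∑ y, r x y = 1) :
    ∑ z : 𝒳 × 𝒴, (∑ y', p z.1 y') * r z.1 z.2 = ∑ z : 𝒳 × 𝒴, p z.1 z.2 := by
  simp only [Fintype.sum_prod_type' (fun x y => (∑ y', p x y') * r x y),
    Fintype.sum_prod_type' p, ← Finset.mul_sum, hr1, mul_one]

lemma condEnt_le_nllLoss (hp0 : ∀ x y, 0 ≤ p x y) (hr0 : ∀ x y, 0 ≤ r x y)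
    (hr1 : ∀ x, ∑ y, r x y = 1) (hrpos : ∀ x y, 0 < p x y → 0 < r x y) :
    condEnt p ≤ nllLoss p r := by
  have := KLdiv_nonneg (fun z : 𝒳 × 𝒴 => hp0 z.1 z.2) (marginal_mul_nonneg hp0 hr0)
    (marginal_mul_pos hp0 hrpos) (sum_marginal_mul hr1).le
  rw [← nllLoss_sub_condEnt hp0 hrpos] at this
  linarith

lemma eq_div_of_nllLoss_eq_condEnt (hp0 : ∀ x y, 0 ≤ p x y) (hr0 : ∀ x y, 0 ≤ r x y)
    (hr1 : ∀ x, ∑ y, r x y = 1) (hrpos : ∀ x y, 0 < p x y → 0 < r x y)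
    (h : nllLoss p r = condEnt p) (x : 𝒳) (hx : 0 < ∑ y', p x y') (y : 𝒴) :
    r x y = p x y / ∑ y', p x y' := by
  have hKL := nllLoss_sub_condEnt hp0 hrpos
  rw [h, sub_self] at hKL
  have := congrFun (eq_of_KLdiv_nonpos (fun z : 𝒳 × 𝒴 => hp0 z.1 z.2)
    (marginal_mul_nonneg hp0 hr0) (marginal_mul_pos hp0 hrpos) (sum_marginal_mul hr1).symm
    hKL.ge) (x, y)
  rw [eq_div_iff hx.ne', this, mul_comm]

end Prediction

section Discriminator

variable {Ω : Type*} [Fintype Ω] {P1 P2 : Ω → ℝ}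

lemma discLoss_nonneg (hP10 : ∀ ω, 0 ≤ P1 ω) (hP20 : ∀ ω, 0 ≤ P2 ω) {D : Ω → ℝ}
    (hD : ∀ ω, D ω ∈ Set.Ioo (0 : ℝ) 1) : 0 ≤ discLoss P1 P2 D := by
  have hlog : ∀ t ∈ Set.Ioo (0 : ℝ) 1, 0 ≤ -log t := fun t ht =>
    neg_nonneg.2 (log_nonpos ht.1.le ht.2.le)
  refine add_nonneg (Finset.sum_nonneg fun ω _ => mul_nonneg (hP10 ω) (hlog _ (hD ω)))
    (Finset.sum_nonneg fun ω _ => mul_nonneg (hP20 ω) (hlog _ ?_))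
  exact ⟨sub_pos.2 (hD ω).2, sub_lt_self 1 (hD ω).1⟩

lemma discLoss_const_half (hP11 : ∑ ω, P1 ω = 1) (hP21 : ∑ ω, P2 ω = 1) :
    discLoss P1 P2 (fun _ => 1 / 2) = log 4 := by
  have h4 : (4 : ℝ) = 2 ^ 2 := by norm_num
  rw [discLoss, show (1 : ℝ) - 1 / 2 = 1 / 2 by norm_num, ← Finset.sum_mul, ← Finset.sum_mul,
    hP11, hP21, one_div, log_inv, h4, log_pow]
  ring

lemma log_div_two_le_log_one_add_div_two {u : ℝ} (hu : 0 < u) :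
    log u / 2 ≤ log ((1 + u) / 2) := by
  have hamgm : u ≤ ((1 + u) / 2) ^ 2 := by nlinarith [sq_nonneg (1 - u)]
  have := log_le_log hu hamgm
  rw [log_pow] at this
  linarith

/-- Applied with `a = P1 ω`, `t = D ω` and with `a = P2 ω`, `t = 1 - D ω`, where
`D = (1 + P1 / m) / 4` and `m = (P1 + P2) / 2`; the second identity for `t` fails where
`P1 ω = P2 ω = 0`, hence the guard `0 < a`. -/
lemma mul_neg_log_le {a m t : ℝ} (ha : 0 ≤ a) (ham : 0 < a → 0 < m)
    (ht : 0 < a → t = (1 + a / m) / 4) :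
    a * -log t ≤ a * log 2 - a * log (a / m) / 2 := by
  rcases ha.eq_or_lt with rfl | ha
  · simp
  · have hu : 0 < a / m := div_pos ha (ham ha)
    have h := log_div_two_le_log_one_add_div_two hu
    rw [ht ha, show (1 + a / m) / 4 = (1 + a / m) / 2 / 2 by ring,
      log_div (by positivity) two_ne_zero]
    nlinarith

lemma exists_discLoss_le_log_four_sub_JSD (hP10 : ∀ ω, 0 ≤ P1 ω) (hP20 : ∀ ω, 0 ≤ P2 ω)
    (hP11 : ∑ ω, P1 ω = 1) (hP21 : ∑ ω, P2 ω = 1) :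
    ∃ D : Ω → ℝ, (∀ ω, D ω ∈ Set.Ioo (0 : ℝ) 1) ∧ discLoss P1 P2 D ≤ log 4 - JSD P1 P2 := by
  obtain ⟨m, hm_def⟩ : ∃ m : Ω → ℝ, m = fun ω => (P1 ω + P2 ω) / 2 := ⟨_, rfl⟩
  have hm : ∀ ω, m ω = (P1 ω + P2 ω) / 2 := fun ω => by rw [hm_def]
  refine ⟨fun ω => (1 + P1 ω / m ω) / 4, fun ω => ?_, ?_⟩
  · have h0 : 0 ≤ P1 ω / m ω := div_nonneg (hP10 ω) (by linarith [hP10 ω, hP20 ω, hm ω])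
    have h2 : P1 ω / m ω ≤ 2 :=
      div_le_of_le_mul₀ (by linarith [hP10 ω, hP20 ω, hm ω]) zero_le_two
        (by linarith [hP20 ω, hm ω])
    constructor <;> linarith
  · have hm1 : ∀ ω, 0 < P1 ω → 0 < m ω := fun ω h => by linarith [hP20 ω, hm ω]
    have hm2 : ∀ ω, 0 < P2 ω → 0 < m ω := fun ω h => by linarith [hP10 ω, hm ω]
    have h1 : ∑ ω, P1 ω * -log ((1 + P1 ω / m ω) / 4) ≤
        ∑ ω, (P1 ω * log 2 - P1 ω * log (P1 ω / m ω) / 2) :=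
      Finset.sum_le_sum fun ω _ => mul_neg_log_le (hP10 ω) (hm1 ω) fun _ => rfl
    have h2 : ∑ ω, P2 ω * -log (1 - (1 + P1 ω / m ω) / 4) ≤
        ∑ ω, (P2 ω * log 2 - P2 ω * log (P2 ω / m ω) / 2) := by
      refine Finset.sum_le_sum fun ω _ => mul_neg_log_le (hP20 ω) (hm2 ω) fun h => ?_
      have hm0 := (hm2 ω h).ne'
      field_simp
      linarith [hm ω]
    have h4 : log 4 = 2 * log 2 := by
      rw [show (4 : ℝ) = 2 ^ 2 by norm_num, log_pow]
      norm_num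
    simp only [Finset.sum_sub_distrib, ← Finset.sum_mul, ← Finset.sum_div, hP11, hP21] at h1 h2
    rw [discLoss, JSD, ← hm_def, KLdiv, KLdiv, h4]
    linarith

lemma eq_of_JSD_nonpos (hP10 : ∀ ω, 0 ≤ P1 ω) (hP20 : ∀ ω, 0 ≤ P2 ω)
    (hP11 : ∑ ω, P1 ω = 1) (hP21 : ∑ ω, P2 ω = 1) (h : JSD P1 P2 ≤ 0) : P1 = P2 := by
  obtain ⟨m, hm_def⟩ : ∃ m : Ω → ℝ, m = fun ω => (P1 ω + P2 ω) / 2 := ⟨_, rfl⟩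
  have hm : ∀ ω, m ω = (P1 ω + P2 ω) / 2 := fun ω => by rw [hm_def]
  have hm0 : ∀ ω, 0 ≤ m ω := fun ω => by linarith [hP10 ω, hP20 ω, hm ω]
  have hm1 : ∑ ω, m ω = 1 := by
    rw [hm_def, ← Finset.sum_div, Finset.sum_add_distrib, hP11, hP21]
    norm_num
  have hKL2 : 0 ≤ KLdiv P2 m :=
    KLdiv_nonneg hP20 hm0 (fun ω hω => by linarith [hP10 ω, hm ω]) (by rw [hm1, hP21])
  have hKL1 : KLdiv P1 m ≤ 0 := by
    rw [JSD, ← hm_def] at h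
    linarith
  have hP1m := eq_of_KLdiv_nonpos hP10 hm0 (fun ω hω => by linarith [hP20 ω, hm ω])
    (by rw [hm1, hP11]) hKL1
  funext ω
  linarith [congrFun hP1m ω, hm ω]

end Discriminator

theorem stmt_14_general {𝒳 𝒴 Ω : Type*} [Fintype 𝒳] [Fintype 𝒴] [Fintype Ω]
    (p : 𝒳 → 𝒴 → ℝ) (hp0 : ∀ x y, 0 ≤ p x y)
    (r : 𝒳 → 𝒴 → ℝ) (hr0 : ∀ x y, 0 ≤ r x y) (hr1 : ∀ x, ∑ y, r x y = 1)
    (hrpos : ∀ x y, 0 < p x y → 0 < r x y)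
    (P1 P2 : Ω → ℝ) (hP10 : ∀ ω, 0 ≤ P1 ω) (hP11 : ∑ ω, P1 ω = 1)
    (hP20 : ∀ ω, 0 ≤ P2 ω) (hP21 : ∑ ω, P2 ω = 1)
    (μ : ℝ) (hμ : μ ∈ Set.Ioo (0 : ℝ) 1)
    (heq : sSup {v : ℝ | ∃ D : Ω → ℝ, (∀ ω, D ω ∈ Set.Ioo (0 : ℝ) 1) ∧
          v = (1 - μ) * nllLoss p r - μ * discLoss P1 P2 D}
        = (1 - μ) * condEnt p - μ * Real.log 4) :
    nllLoss p r = condEnt p ∧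
    (∀ x, 0 < ∑ y', p x y' → ∀ y, r x y = p x y / ∑ y', p x y') ∧
    P1 = P2 := by
  obtain ⟨hμ0, hμ1⟩ := hμ
  set values := {v : ℝ | ∃ D : Ω → ℝ, (∀ ω, D ω ∈ Set.Ioo (0 : ℝ) 1) ∧
    v = (1 - μ) * nllLoss p r - μ * discLoss P1 P2 D}
  have hbdd : BddAbove values := by
    refine ⟨(1 - μ) * nllLoss p r, ?_⟩
    rintro _ ⟨D, hD, rfl⟩
    nlinarith [discLoss_nonneg hP10 hP20 hD]
  have hvalue : ∀ D : Ω → ℝ, (∀ ω, D ω ∈ Set.Ioo (0 : ℝ) 1) →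
      (1 - μ) * nllLoss p r - μ * discLoss P1 P2 D ≤ (1 - μ) * condEnt p - μ * log 4 :=
    fun D hD => heq ▸ le_csSup hbdd ⟨D, hD, rfl⟩
  have hL : nllLoss p r = condEnt p := by
    refine le_antisymm ?_ (condEnt_le_nllLoss hp0 hr0 hr1 hrpos)
    have := hvalue (fun _ => 1 / 2) fun _ => ⟨by norm_num, by norm_num⟩
    rw [discLoss_const_half hP11 hP21] at this
    nlinarith
  obtain ⟨D, hD, hDJSD⟩ := exists_discLoss_le_log_four_sub_JSD hP10 hP20 hP11 hP21
  have hDvalue := hvalue D hD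
  rw [hL] at hDvalue
  refine ⟨hL, eq_div_of_nllLoss_eq_condEnt hp0 hr0 hr1 hrpos hL,
    eq_of_JSD_nonpos hP10 hP20 hP11 hP21 ?_⟩
  nlinarith

/-- Theorem 2.2, discrete form: if the minimax adversarial value
`(1−μ)H(Y|X) − μ·log 4` is attained, i.e.
`sup_D [(1−μ)L_f(r) − μ·L_d(D)] = (1−μ)H(Y|X) − μ·log 4` with `μ ∈ (0,1)`, then
(a) `L_f(r) = H(Y|X)`, so `r(y|x) = P(Y=y|X=x)` whenever `P(X=x) > 0`, and (b) `P1 = P2`. -/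
theorem stmt_14 {𝒳 𝒴 Ω : Type*} [Fintype 𝒳] [Fintype 𝒴] [Fintype Ω]
    (p : 𝒳 → 𝒴 → ℝ) (hp0 : ∀ x y, 0 ≤ p x y) (hp1 : ∑ x, ∑ y, p x y = 1)
    (r : 𝒳 → 𝒴 → ℝ) (hr0 : ∀ x y, 0 ≤ r x y) (hr1 : ∀ x, ∑ y, r x y = 1)
    (hrpos : ∀ x y, 0 < p x y → 0 < r x y)
    (P1 P2 : Ω → ℝ) (hP10 : ∀ ω, 0 ≤ P1 ω) (hP11 : ∑ ω, P1 ω = 1)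
    (hP20 : ∀ ω, 0 ≤ P2 ω) (hP21 : ∑ ω, P2 ω = 1)
    (μ : ℝ) (hμ : μ ∈ Set.Ioo (0 : ℝ) 1)
    (heq : sSup {v : ℝ | ∃ D : Ω → ℝ, (∀ ω, D ω ∈ Set.Ioo (0 : ℝ) 1) ∧
          v = (1 - μ) * nllLoss p r - μ * discLoss P1 P2 D}
        = (1 - μ) * condEnt p - μ * Real.log 4) :
    nllLoss p r = condEnt p ∧
    (∀ x, 0 < ∑ y', p x y' → ∀ y, r x y = p x y / ∑ y', p x y') ∧
    P1 = P2 :=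
  stmt_14_general p hp0 r hr0 hr1 hrpos P1 P2 hP10 hP11 hP20 hP21 μ hμ heq
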